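/- arXiv:2111.12882 — 5 statements merged into one kernel-verified Lean document; each statement's English description precedes it below -/
import Mathlib

section
/- Let T : 𝕋 → 𝕋 be given by T(x) = x(1 + V(x)) mod 1 on the circle 𝕋 = ℝ/ℤ with metric d(x,y) = min{|x−y|, |x−y±1|}, where V : [0,∞) → [0,∞) is continuous, increasing, V(0)=0, V(1) ∈ ℕ₊, and V is regularly varying at 0 with index σ ≥ 0. Then there exists ρ₀ > 0 such that for all x, y ∈ 𝕋 with d(x,y) < ρ₀, d(T(x), T(y)) ≥ d(x,y)·(1 + 2^{−(σ+2)} V(d(x,y))). -/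
open Real Filter Set

/-- The circle metric on `[0,1)`: `d(x,y) = min{|x−y|, |x−y−1|, |x−y+1|}`. -/
noncomputable def cdist (x y : ℝ) : ℝ := min |x - y| (min |x - y - 1| |x - y + 1|)

/-- The map `T(x) = x(1 + V(x)) mod 1` on the circle represented as `[0,1)`. -/
noncomputable def circMap (V : ℝ → ℝ) (x : ℝ) : ℝ := Int.fract (x * (1 + V x))

/-!
Write `F x = x (1 + V x)` for the lift of `T` and let `x ≤ y` be at circle distance `d`.
If the short arc is `[x, y]`, then `F y - F x ≥ d (1 + V d)` because `t ↦ t V t` is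
superadditive. If the short arc wraps through `0`, then `d = x + (1 - y)` and
`F x + V 1 + 1 - F y ≥ d + x V x + (1 - y) V (1 - y)`; one of `x`, `1 - y` is at least `d / 2`,
and regular variation gives `V d ≤ 2^(σ+1) V (d / 2)` for small `d`. In both cases uniform
continuity of `V` keeps the increment below `1 / 2`, so it is a lower bound for the circle
distance of the images.
-/

open Topology

lemma ContinuousOn.exists_forall_sub_le_of_Icc {f : ℝ → ℝ} {a b ε : ℝ}
    (hf : ContinuousOn f (Icc a b)) (hε : 0 < ε) :
    ∃ δ > 0, ∀ x ∈ Icc a b, ∀ y ∈ Icc a b, y ≤ x → x - y < δ → f x - f y ≤ ε := by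
  obtain ⟨δ, hδ, h⟩ := Metric.uniformContinuousOn_iff.1
    (isCompact_Icc.uniformContinuousOn_of_continuous hf) ε hε
  refine ⟨δ, hδ, fun x hx y hy hyx hxy => (le_abs_self _).trans ?_⟩
  rw [← Real.dist_eq]
  exact (h x hx y hy (by rwa [Real.dist_eq, abs_of_nonneg (sub_nonneg.2 hyx)])).le

lemma cdist_comm (x y : ℝ) : cdist x y = cdist y x := by
  unfold cdist
  rw [abs_sub_comm, show x - y - 1 = -(y - x + 1) by ring,
    show x - y + 1 = -(y - x - 1) by ring, abs_neg, abs_neg, min_comm |y - x + 1|]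

lemma cdist_eq_min {x y : ℝ} (hxy : x ≤ y) (hyx : y ≤ x + 1) :
    cdist x y = min (y - x) (1 - (y - x)) := by
  rw [cdist, abs_of_nonpos (by linarith : x - y ≤ 0), abs_of_nonpos (by linarith : x - y - 1 ≤ 0),
    abs_of_nonneg (by linarith : 0 ≤ x - y + 1), ← min_assoc,
    min_eq_left (by linarith : -(x - y) ≤ -(x - y - 1))]
  ring_nf

lemma le_cdist_fract {u v Δ : ℝ} (k : ℤ) (h : u - v = Δ + k) (hΔ₀ : 0 ≤ Δ) (hΔ : Δ ≤ 1 / 2) :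
    Δ ≤ cdist (Int.fract u) (Int.fract v) := by
  have hdiff : Int.fract u - Int.fract v = Δ + (k + ⌊v⌋ - ⌊u⌋ : ℤ) := by
    rw [Int.fract, Int.fract]; push_cast; linarith
  have hu₀ := Int.fract_nonneg u
  have hu₁ := Int.fract_lt_one u
  have hv₀ := Int.fract_nonneg v
  have hv₁ := Int.fract_lt_one v
  have hm : k + ⌊v⌋ - ⌊u⌋ = 0 ∨ k + ⌊v⌋ - ⌊u⌋ = -1 := by
    have : k + ⌊v⌋ - ⌊u⌋ < 1 := by exact_mod_cast (by linarith : ((k + ⌊v⌋ - ⌊u⌋ : ℤ) : ℝ) < 1)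
    have : -2 < k + ⌊v⌋ - ⌊u⌋ := by exact_mod_cast (by linarith : (-2 : ℝ) < (k + ⌊v⌋ - ⌊u⌋ : ℤ))
    omega
  rcases hm with hm | hm <;> rw [hm] at hdiff <;> push_cast at hdiff <;> unfold cdist <;>
    refine le_min ?_ (le_min ?_ ?_) <;> rw [le_abs] <;> first | left; linarith | right; linarith

section

variable {V : ℝ → ℝ} {N : ℕ}

lemma sub_mul_apply_sub_le (hmono : MonotoneOn V (Ici 0)) {x y : ℝ} (hx : 0 ≤ x) (hxy : x ≤ y) :
    (y - x) * V (y - x) ≤ y * V y - x * V x := by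
  have hV₁ : V (y - x) ≤ V y := hmono (sub_nonneg.2 hxy) (hx.trans hxy) (by linarith)
  have hV₂ : V x ≤ V y := hmono hx (hx.trans hxy) hxy
  nlinarith [mul_nonneg hx (sub_nonneg.2 hV₂)]

lemma add_mul_apply_add_le (hmono : MonotoneOn V (Ici 0)) (hnn : ∀ t, 0 ≤ t → 0 ≤ V t)
    {C δ : ℝ} (hC : 0 ≤ C) (hdouble : ∀ t, 0 < t → t < δ → V (2 * t) ≤ C * V t)
    {a b : ℝ} (ha : 0 ≤ a) (hb : 0 ≤ b) (hab : a + b < 2 * δ) :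
    (a + b) * V (a + b) ≤ 2 * C * (a * V a + b * V b) := by
  wlog hba : b ≤ a generalizing a b
  · simpa only [add_comm a, add_comm (a * V a)] using this hb ha (by linarith) (by linarith)
  have hbVb : 0 ≤ b * V b := mul_nonneg hb (hnn b hb)
  rcases (add_nonneg ha hb).eq_or_lt with h₀ | h₀
  · rw [← h₀, zero_mul]
    exact mul_nonneg (by positivity) (add_nonneg (mul_nonneg ha (hnn a ha)) hbVb)
  set t := (a + b) / 2 with ht_def
  have ht : 0 < t := by positivity
  have hta : t * V t ≤ a * V a :=
    mul_le_mul (by linarith) (hmono ht.le ha (by linarith)) (hnn t ht.le) ha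
  calc (a + b) * V (a + b) = 2 * t * V (2 * t) := by rw [show 2 * t = a + b by ring]
    _ ≤ 2 * t * (C * V t) := by gcongr; exact hdouble t ht (by linarith)
    _ = 2 * C * (t * V t) := by ring
    _ ≤ 2 * C * (a * V a + b * V b) := by gcongr; linarith

lemma exists_apply_two_mul_le_of_tendsto {L C : ℝ}
    (hpos : ∀ t, 0 < t → 0 < V t)
    (hlim : Tendsto (fun x => V (2 * x) / V x) (𝓝[>] 0) (𝓝 L)) (hLC : L < C) :
    ∃ δ > 0, ∀ t, 0 < t → t < δ → V (2 * t) ≤ C * V t := by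
  obtain ⟨δ, hδ, h⟩ := (nhdsGT_basis (0 : ℝ)).eventually_iff.1 (hlim.eventually_lt_const hLC)
  exact ⟨δ, hδ, fun t ht htδ => ((div_lt_iff₀ (hpos t ht)).1 (h ⟨ht, htδ⟩)).le⟩

lemma le_cdist_circMap_of_short_arc (hmono : MonotoneOn V (Ici 0))
    (hnn : ∀ t, 0 ≤ t → 0 ≤ V t) (hV1 : V 1 = N) {c x y : ℝ} (hc : c ≤ 1)
    (hx : 0 ≤ x) (hxy : x ≤ y) (hy : y ≤ 1) (hsmall : (y - x) * (1 + N) ≤ 1 / 8)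
    (hosc : V y - V x ≤ 1 / 8) :
    (y - x) * (1 + c * V (y - x)) ≤ cdist (circMap V x) (circMap V y) := by
  have hVd := hnn _ (sub_nonneg.2 hxy)
  have hVxy : V x ≤ V y := hmono hx (hx.trans hxy) hxy
  have hVy : V y ≤ N := hV1 ▸ hmono (hx.trans hxy) (mem_Ici.2 zero_le_one) hy
  set Δ := y * (1 + V y) - x * (1 + V x)
  have hlift : (y - x) * (1 + V (y - x)) ≤ Δ := by
    nlinarith [sub_mul_apply_sub_le hmono hx hxy]
  have hlower : (y - x) * (1 + c * V (y - x)) ≤ Δ :=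
    le_trans (by nlinarith [mul_nonneg (sub_nonneg.2 hxy) (mul_nonneg (sub_nonneg.2 hc) hVd)])
      hlift
  have hupper : Δ ≤ 1 / 2 := by
    nlinarith [mul_le_mul_of_nonneg_left hVy (sub_nonneg.2 hxy),
      mul_le_of_le_one_left (sub_nonneg.2 hVxy) (hxy.trans hy)]
  rw [cdist_comm]
  exact hlower.trans (le_cdist_fract 0 (by simp [Δ]) (le_trans (by positivity) hlift) hupper)

lemma le_cdist_circMap_of_long_arc (hmono : MonotoneOn V (Ici 0))
    (hnn : ∀ t, 0 ≤ t → 0 ≤ V t) (hV1 : V 1 = N) {σ δ x y : ℝ}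
    (hdouble : ∀ t, 0 < t → t < δ → V (2 * t) ≤ 2 ^ (σ + 1) * V t)
    (hx : 0 ≤ x) (hy : y < 1) (hd : 1 - (y - x) < δ)
    (hsmall : (1 - (y - x)) * (1 + N) ≤ 1 / 8) (hosc : V 1 - V y ≤ 1 / 8) :
    (1 - (y - x)) * (1 + 2 ^ (-(σ + 2)) * V (1 - (y - x))) ≤
      cdist (circMap V x) (circMap V y) := by
  set d := 1 - (y - x) with hd_def
  have hd₀ : 0 ≤ d := by linarith
  have hd₈ : d ≤ 1 / 8 := by nlinarith [(Nat.cast_nonneg N : (0 : ℝ) ≤ N)]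
  have hy₀ : 0 ≤ y := by linarith
  have hVx : V x ≤ N := hV1 ▸ hmono hx (mem_Ici.2 zero_le_one) (by linarith)
  have hVy : V y ≤ N := hV1 ▸ hmono hy₀ (mem_Ici.2 zero_le_one) hy.le
  have hV1y : V (1 - y) ≤ V y := hmono (mem_Ici.2 (by linarith)) hy₀ (by linarith)
  have hcore : 2 ^ (-(σ + 2)) * (d * V d) ≤ x * V x + (1 - y) * V (1 - y) := by
    have h := add_mul_apply_add_le hmono hnn (by positivity) hdouble hx (by linarith)
      (by linarith : x + (1 - y) < 2 * δ)
    have hc : (2 : ℝ) ^ (-(σ + 2)) * (2 * 2 ^ (σ + 1)) = 1 := by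
      rw [mul_comm 2, ← rpow_add_one two_ne_zero, ← rpow_add two_pos]; ring_nf; simp
    rw [show x + (1 - y) = d by ring] at h
    calc 2 ^ (-(σ + 2)) * (d * V d)
        ≤ 2 ^ (-(σ + 2)) * (2 * 2 ^ (σ + 1) * (x * V x + (1 - y) * V (1 - y))) := by gcongr
      _ = x * V x + (1 - y) * V (1 - y) := by rw [← mul_assoc, hc, one_mul]
  set Δ := x * (1 + V x) + (1 + N) - y * (1 + V y)
  have hΔ : Δ = d + x * V x + (N - V y) + (1 - y) * V y := by ring
  have hlower : d * (1 + 2 ^ (-(σ + 2)) * V d) ≤ Δ := by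
    nlinarith [mul_le_mul_of_nonneg_left hV1y (by linarith : (0 : ℝ) ≤ 1 - y)]
  have hupper : Δ ≤ 1 / 2 := by
    nlinarith [mul_le_mul_of_nonneg_left hVx hx,
      mul_le_mul_of_nonneg_left hVy (by linarith : (0 : ℝ) ≤ 1 - y)]
  have hΔ₀ : 0 ≤ Δ := le_trans (by have := hnn d hd₀; positivity) hlower
  exact hlower.trans (le_cdist_fract (-(1 + N)) (by simp only [Δ]; push_cast; ring) hΔ₀ hupper)

end

theorem distance_expansion_general (V : ℝ → ℝ) (σ : ℝ) (hσ : 0 ≤ σ) (N : ℕ)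
    (hV0 : V 0 = 0) (hV1 : V 1 = N) (hVnn : ∀ x, 0 ≤ x → 0 ≤ V x)
    (hVcont : ContinuousOn V (Ici 0)) (hVmono : StrictMonoOn V (Ici 0))
    (hreg : ∀ t : ℝ, 0 < t →
      Tendsto (fun x => V (t * x) / V x) (nhdsWithin 0 (Ioi 0)) (nhds (t ^ σ))) :
    ∃ ρ₀ > 0, ∀ x ∈ Ico (0 : ℝ) 1, ∀ y ∈ Ico (0 : ℝ) 1, cdist x y < ρ₀ →
      cdist x y * (1 + (2 : ℝ) ^ (-(σ + 2)) * V (cdist x y)) ≤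
        cdist (circMap V x) (circMap V y) := by
  have hmono := hVmono.monotoneOn
  have hVcont₀₁ : ContinuousOn V (Icc 0 1) := hVcont.mono Icc_subset_Ici_self
  obtain ⟨δ₁, hδ₁, hosc⟩ := hVcont₀₁.exists_forall_sub_le_of_Icc (by norm_num : (0 : ℝ) < 1 / 8)
  obtain ⟨δ₂, hδ₂, hdouble⟩ := exists_apply_two_mul_le_of_tendsto
    (fun t ht => hV0 ▸ hVmono self_mem_Ici ht.le ht) (hreg 2 two_pos)
    (rpow_lt_rpow_of_exponent_lt one_lt_two (lt_add_one σ))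
  have hc : (2 : ℝ) ^ (-(σ + 2)) ≤ 1 := rpow_le_one_of_one_le_of_nonpos one_le_two (by linarith)
  set ρ := min (min δ₁ δ₂) (1 / (8 * (1 + N)))
  have hρ : ρ * (1 + N) ≤ 1 / 8 := by
    rw [← le_div_iff₀ (by positivity), div_div]; exact min_le_right _ _
  refine ⟨ρ, by positivity, fun x hx y hy hxyρ => ?_⟩
  wlog hxy : x ≤ y generalizing x y
  · rw [cdist_comm, cdist_comm (circMap V x)] at *
    exact this y hy x hx hxyρ (le_of_not_ge hxy)
  have hρδ₁ : ρ ≤ δ₁ := (min_le_left _ _).trans (min_le_left _ _)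
  have hρδ₂ : ρ ≤ δ₂ := (min_le_left _ _).trans (min_le_right _ _)
  rw [cdist_eq_min hxy (by linarith [hx.1, hy.2])] at *
  rcases le_total (y - x) (1 - (y - x)) with hshort | hlong
  · rw [min_eq_left hshort] at *
    exact le_cdist_circMap_of_short_arc hmono hVnn hV1 hc hx.1 hxy hy.2.le (by nlinarith)
      (hosc y ⟨hy.1, hy.2.le⟩ x ⟨hx.1, hx.2.le⟩ hxy (by linarith))
  · rw [min_eq_right hlong] at *
    exact le_cdist_circMap_of_long_arc hmono hVnn hV1 hdouble hx.1 hy.2 (by linarith)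
      (by nlinarith) (hosc 1 ⟨zero_le_one, le_rfl⟩ y ⟨hy.1, hy.2.le⟩ hy.2.le (by linarith [hx.1]))

/-- Distance-expansion lemma: for `T(x) = x(1+V(x)) mod 1` with `V` continuous,
increasing, `V(0)=0`, `V(1)` a positive integer, regularly varying at `0` with index
`σ ≥ 0`, there is `ρ₀ > 0` so that `d(Tx,Ty) ≥ d(x,y)(1 + 2^{−(σ+2)} V(d(x,y)))`
whenever `d(x,y) < ρ₀`. -/
theorem distance_expansion (V : ℝ → ℝ) (σ : ℝ) (hσ : 0 ≤ σ) (N : ℕ) (hN : 0 < N)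
    (hV0 : V 0 = 0) (hV1 : V 1 = N) (hVnn : ∀ x, 0 ≤ x → 0 ≤ V x)
    (hVcont : ContinuousOn V (Ici 0)) (hVmono : StrictMonoOn V (Ici 0))
    (hreg : ∀ t : ℝ, 0 < t →
      Tendsto (fun x => V (t * x) / V x) (nhdsWithin 0 (Ioi 0)) (nhds (t ^ σ))) :
    ∃ ρ₀ > 0, ∀ x ∈ Ico (0 : ℝ) 1, ∀ y ∈ Ico (0 : ℝ) 1, cdist x y < ρ₀ →
      cdist x y * (1 + (2 : ℝ) ^ (-(σ + 2)) * V (cdist x y)) ≤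
        cdist (circMap V x) (circMap V y) :=
  distance_expansion_general V σ hσ N hV0 hV1 hVnn hVcont hVmono hreg
end

section
/- Let T : 𝕋 → 𝕋 be as above (T(x) = x(1+V(x)) mod 1 with N_V = 1 + V(1) inverse branches, indifferent fixed point 0). For every ε ∈ (0,1) there exists ρ > 0 such that for all x, y ∈ [ε, 1) with d(x,y) < ρ, d(T(x),T(y)) ≥ (1 + V(ε))·d(x,y). That is, T is uniformly expanding outside any neighborhood of the fixed point. -/
open Real Set

/-! The lift `x ↦ x(1 + V x)` of `T` is continuous, hence moves nearby points by less than `1/2`;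
on such scales reduction mod 1 does not shrink distances, and on `[ε, 1)` the lift stretches
distances by at least `1 + V ε` because `V` is monotone. -/

lemma cdist_eq_abs_sub_of_lt {ε x y : ℝ} (hx : x ∈ Ico ε 1) (hy : y ∈ Ico ε 1)
    (h : cdist x y < ε) : cdist x y = |x - y| := by
  have hwrap : ε ≤ min |x - y - 1| |x - y + 1| :=
    le_min (le_abs.2 (Or.inr (by linarith [hx.2, hy.1])))
      (le_abs.2 (Or.inl (by linarith [hx.1, hy.2])))
  have habs : |x - y| < ε := (min_lt_iff.1 h).resolve_right (not_lt.2 hwrap)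
  exact min_eq_left (habs.le.trans hwrap)

lemma abs_le_abs_sub_intCast {t : ℝ} (ht : |t| ≤ 1 / 2) (m : ℤ) : |t| ≤ |t - m| := by
  rcases eq_or_ne m 0 with rfl | hm
  · simp
  · have hm1 : (1 : ℝ) ≤ |(m : ℝ)| := by exact_mod_cast Int.one_le_abs hm
    have := abs_sub_abs_le_abs_sub (m : ℝ) t
    rw [abs_sub_comm (m : ℝ)] at this
    linarith

lemma abs_sub_le_cdist_fract {a b : ℝ} (h : |a - b| ≤ 1 / 2) :
    |a - b| ≤ cdist (Int.fract a) (Int.fract b) := by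
  have hfract : Int.fract a - Int.fract b = a - b - ((⌊a⌋ - ⌊b⌋ : ℤ) : ℝ) := by
    simp only [Int.fract, Int.cast_sub]; ring
  refine le_min ?_ (le_min ?_ ?_)
  · rw [hfract]
    exact abs_le_abs_sub_intCast h _
  · have : Int.fract a - Int.fract b - 1 = a - b - ((⌊a⌋ - ⌊b⌋ + 1 : ℤ) : ℝ) := by
      rw [hfract]; push_cast; ring
    rw [this]
    exact abs_le_abs_sub_intCast h _
  · have : Int.fract a - Int.fract b + 1 = a - b - ((⌊a⌋ - ⌊b⌋ - 1 : ℤ) : ℝ) := by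
      rw [hfract]; push_cast; ring
    rw [this]
    exact abs_le_abs_sub_intCast h _

section Expansion

variable {V : ℝ → ℝ} {ε x y : ℝ}

lemma one_add_mul_sub_le_of_monotoneOn (hV : MonotoneOn V (Ici ε)) (hε : 0 ≤ ε)
    (hx : ε ≤ x) (hxy : x ≤ y) :
    (1 + V ε) * (y - x) ≤ y * (1 + V y) - x * (1 + V x) := by
  have hεx : V ε ≤ V x := hV self_mem_Ici hx hx
  have hxy' : V x ≤ V y := hV hx (hx.trans hxy) hxy
  -- `y(1 + V y) - x(1 + V x) - (1 + V ε)(y - x) = (y - x)(V x - V ε) + y(V y - V x)`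
  nlinarith [mul_nonneg (sub_nonneg.2 hxy) (sub_nonneg.2 hεx),
    mul_nonneg (hε.trans (hx.trans hxy)) (sub_nonneg.2 hxy')]

lemma one_add_mul_abs_sub_le_of_monotoneOn (hV : MonotoneOn V (Ici ε)) (hε : 0 ≤ ε)
    (hx : ε ≤ x) (hy : ε ≤ y) :
    (1 + V ε) * |x - y| ≤ |x * (1 + V x) - y * (1 + V y)| := by
  rcases le_total x y with hxy | hyx
  · rw [abs_sub_comm x, abs_sub_comm (x * _), abs_of_nonneg (sub_nonneg.2 hxy)]
    exact (one_add_mul_sub_le_of_monotoneOn hV hε hx hxy).trans (le_abs_self _)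
  · rw [abs_of_nonneg (sub_nonneg.2 hyx)]
    exact (one_add_mul_sub_le_of_monotoneOn hV hε hy hyx).trans (le_abs_self _)

end Expansion

theorem uniform_expansion_outside_general (V : ℝ → ℝ)
    (hVcont : ContinuousOn V (Ici 0)) (hVmono : StrictMonoOn V (Ici 0)) :
    ∀ ε : ℝ, 0 < ε → ε < 1 → ∃ ρ > 0, ∀ x ∈ Ico ε 1, ∀ y ∈ Ico ε 1,
      cdist x y < ρ → (1 + V ε) * cdist x y ≤ cdist (circMap V x) (circMap V y) := by
  intro ε hε _
  have hlift : UniformContinuousOn (fun x => x * (1 + V x)) (Icc 0 1) :=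
    isCompact_Icc.uniformContinuousOn_of_continuous
      (continuousOn_id.mul (continuousOn_const.add (hVcont.mono Icc_subset_Ici_self)))
  obtain ⟨δ, hδ, hliftδ⟩ := Metric.uniformContinuousOn_iff.1 hlift (1 / 2) (by norm_num)
  refine ⟨min δ ε, by positivity, fun x hx y hy hxy => ?_⟩
  have hmem : ∀ z ∈ Ico ε 1, z ∈ Icc (0 : ℝ) 1 := fun z hz => ⟨hε.le.trans hz.1, hz.2.le⟩
  have hd : cdist x y = |x - y| := cdist_eq_abs_sub_of_lt hx hy (hxy.trans_le (min_le_right _ _))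
  have hclose : |x * (1 + V x) - y * (1 + V y)| ≤ 1 / 2 := by
    refine (hliftδ x (hmem x hx) y (hmem y hy) ?_).le
    rw [Real.dist_eq, ← hd]
    exact hxy.trans_le (min_le_left _ _)
  rw [hd]
  exact (one_add_mul_abs_sub_le_of_monotoneOn
    (hVmono.monotoneOn.mono (Ici_subset_Ici.2 hε.le)) hε.le hx.1 hy.1).trans
    (abs_sub_le_cdist_fract hclose)

/-- Uniform expansion outside any neighborhood of the indifferent fixed point:
for every `ε ∈ (0,1)` there is `ρ > 0` such that for all `x, y ∈ [ε, 1)` with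
`d(x,y) < ρ`, `d(T(x),T(y)) ≥ (1 + V(ε)) d(x,y)`. -/
theorem uniform_expansion_outside (V : ℝ → ℝ) (N : ℕ) (hN : 0 < N)
    (hV0 : V 0 = 0) (hV1 : V 1 = N) (hVnn : ∀ x, 0 ≤ x → 0 ≤ V x)
    (hVcont : ContinuousOn V (Ici 0)) (hVmono : StrictMonoOn V (Ici 0)) :
    ∀ ε : ℝ, 0 < ε → ε < 1 → ∃ ρ > 0, ∀ x ∈ Ico ε 1, ∀ y ∈ Ico ε 1,
      cdist x y < ρ → (1 + V ε) * cdist x y ≤ cdist (circMap V x) (circMap V y) :=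
  uniform_expansion_outside_general V hVcont hVmono
end

section
/- Let T be a map in 𝓕 and let ω, Ω be concave moduli of continuity (continuous, nondecreasing, vanishing at 0, concave). Suppose for some sufficiently small c > 0 that liminf_{x→0⁺} (V(x)/ω(x))·(Ω((1+c)x) − Ω(x)) > 0. Then there exist ρ₁ > 0 and C₁ > 0 such that for all x₀, x₁, y₀ ∈ 𝕋 with T(x₁) = x₀ and d(x₀,y₀) < ρ₁, there is a unique y₁ ∈ T^{−1}(y₀) with d(x₁,y₁) ≤ d(x₀,y₀) < ρ₁ satisfying Ω(d(x₁,y₁)) + C₁·ω(d(x₁,y₁)) ≤ Ω(d(x₀,y₀)); moreover the correspondence x₁ ↦ y₁ is injective. -/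
open Real Filter Set

/-!
Lift `T` to the increasing homeomorphism `F x = {x} (1 + V {x}) + (N + 1) ⌊x⌋` of `ℝ`, so that
`T ∘ fract = fract ∘ F`. Writing `ψ t = t V t`, which is superadditive, `F` expands:
`|p - q| + ψ (|p - q| / 2) ≤ |F p - F q|` whenever `|p - q| < 1` (the halving absorbs the case
where `p` and `q` lie on both sides of an integer). Uniform continuity of `F` separates distinct
preimages of a point, which gives uniqueness and injectivity, and surjectivity of `F` provides
`y₁` with `d + ψ (d / 2) ≤ d(x₀, y₀)` for `d = d(x₁, y₁)`.

To turn this expansion into the gain `C ω(d)`, use concavity of `Ω` along the step `V(d) · c d`: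
it gains at least `V(d) (Ω((1 + c) d) - Ω(d)) ≥ C ω(d)` by the liminf hypothesis, and it fits
into the expansion `ψ (d / 2)` because regular variation gives `V(d / 2) ≥ 2 c V(d)` for small
`d`, as `2 c < 2^(-σ)`.
-/

open Topology

lemma cdist_nonneg (x y : ℝ) : 0 ≤ cdist x y := by
  unfold cdist; positivity

lemma exists_int_cdist_eq (x y : ℝ) : ∃ m : ℤ, |m| ≤ 1 ∧ cdist x y = |x - (y + m)| := by
  unfold cdist
  rcases min_choice |x - y| (min |x - y - 1| |x - y + 1|) with h | h <;> rw [h]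
  · exact ⟨0, by simp⟩
  rcases min_choice |x - y - 1| |x - y + 1| with h' | h' <;> rw [h']
  · exact ⟨1, by norm_num, by push_cast; ring_nf⟩
  · exact ⟨-1, by norm_num, by push_cast; ring_nf⟩

lemma cdist_le_abs_sub_add_int (x y : ℝ) {m : ℤ} (hm : |m| ≤ 1) :
    cdist x y ≤ |x - (y + m)| := by
  unfold cdist
  rcases abs_le.mp hm with ⟨hm₁, hm₂⟩
  interval_cases m
  · exact (min_le_right _ _).trans (min_le_right _ _) |>.trans_eq (by push_cast; ring_nf)
  · exact (min_le_left _ _).trans_eq (by push_cast; ring_nf)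
  · exact (min_le_right _ _).trans (min_le_left _ _) |>.trans_eq (by push_cast; ring_nf)

lemma cdist_fract_le {x w : ℝ} (hx : x ∈ Ico 0 1) (hxw : |x - w| < 1) :
    cdist x (Int.fract w) ≤ |x - w| := by
  have hw := abs_lt.mp hxw
  have h₁ : -1 ≤ ⌊w⌋ := Int.le_floor.mpr (by push_cast; linarith [hx.1])
  have h₂ : ⌊w⌋ ≤ 1 := Int.floor_le_iff.mpr (by push_cast; linarith [hx.2])
  simpa [Int.fract_add_floor] using cdist_le_abs_sub_add_int x (Int.fract w) (abs_le.mpr ⟨h₁, h₂⟩)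

lemma fract_add_intCast_of_mem_Ico {u : ℝ} (hu : u ∈ Ico 0 1) (m : ℤ) : Int.fract (u + m) = u := by
  rw [Int.fract_add_intCast, Int.fract_eq_self.mpr hu]

section MulApply

variable {V : ℝ → ℝ}

lemma monotoneOn_mul_apply (hVnn : ∀ x, 0 ≤ x → 0 ≤ V x) (hVmono : MonotoneOn V (Ici 0)) :
    MonotoneOn (fun t => t * V t) (Ici 0) := fun s hs _ ht hst =>
  mul_le_mul hst (hVmono hs ht hst) (hVnn s hs) (le_trans hs hst)

lemma mul_apply_add_mul_apply_le (hVmono : MonotoneOn V (Ici 0)) {s t : ℝ}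
    (hs : 0 ≤ s) (ht : 0 ≤ t) : s * V s + t * V t ≤ (s + t) * V (s + t) := by
  have hst : 0 ≤ s + t := add_nonneg hs ht
  have h₁ := mul_le_mul_of_nonneg_left (hVmono hs hst (by linarith)) hs
  have h₂ := mul_le_mul_of_nonneg_left (hVmono ht hst (by linarith)) ht
  linarith

end MulApply

section Lift

variable {V : ℝ → ℝ} {N : ℕ}

noncomputable def circLift (V : ℝ → ℝ) (N : ℕ) (x : ℝ) : ℝ :=
  Int.fract x * (1 + V (Int.fract x)) + (N + 1) * ⌊x⌋

lemma circMap_fract (w : ℝ) : circMap V (Int.fract w) = Int.fract (circLift V N w) := by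
  unfold circMap circLift
  rw [show ((N : ℝ) + 1) * ⌊w⌋ = (((N + 1) * ⌊w⌋ : ℤ) : ℝ) by push_cast; ring,
    Int.fract_add_intCast]

lemma circLift_sub_self (x : ℝ) :
    circLift V N x - x = Int.fract x * V (Int.fract x) + N * ⌊x⌋ := by
  rw [circLift]
  linear_combination Int.fract_add_floor x

lemma continuous_circLift (hVcont : ContinuousOn V (Ici 0)) (hV1 : V 1 = N) :
    Continuous (circLift V N) := by
  set h : ℝ → ℝ := fun t => t * (1 + V t) - (N + 1) * t
  have hh : Continuous (h ∘ Int.fract) := by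
    refine ContinuousOn.comp_fract'' ?_ (by simp [h, hV1]; ring)
    exact (continuousOn_id.mul (continuousOn_const.add (hVcont.mono Icc_subset_Ici_self))).sub
      (continuousOn_const.mul continuousOn_id)
  have hlift : circLift V N = fun x => (N + 1) * x + (h ∘ Int.fract) x := by
    funext x
    simp only [circLift, h, Function.comp_apply]
    linear_combination ((N : ℝ) + 1) * Int.fract_add_floor x
  rw [hlift]
  exact (continuous_const.mul continuous_id).add hh

lemma monotone_circLift_sub_self (hVnn : ∀ x, 0 ≤ x → 0 ≤ V x) (hVmono : MonotoneOn V (Ici 0))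
    (hV1 : V 1 = N) : Monotone (fun x => circLift V N x - x) := by
  intro p q hpq
  simp only [circLift_sub_self]
  have hψ := monotoneOn_mul_apply hVnn hVmono
  have hfloor : ⌊p⌋ ≤ ⌊q⌋ := Int.floor_mono hpq
  rcases hfloor.eq_or_lt with h | h
  · have hfract : Int.fract p ≤ Int.fract q := by
      rw [Int.fract, Int.fract, h]; linarith
    rw [h]
    linarith [hψ (Int.fract_nonneg p) (Int.fract_nonneg q) hfract]
  · have hp : Int.fract p * V (Int.fract p) ≤ N := by
      simpa [hV1] using hψ (Int.fract_nonneg p) (mem_Ici.mpr zero_le_one) (Int.fract_lt_one p).le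
    have hq : 0 ≤ Int.fract q * V (Int.fract q) :=
      mul_nonneg (Int.fract_nonneg q) (hVnn _ (Int.fract_nonneg q))
    have hfloor' : (⌊p⌋ : ℝ) + 1 ≤ ⌊q⌋ := by exact_mod_cast h
    linarith [mul_le_mul_of_nonneg_left hfloor' N.cast_nonneg]

lemma sub_le_circLift_sub (hVnn : ∀ x, 0 ≤ x → 0 ≤ V x) (hVmono : MonotoneOn V (Ici 0))
    (hV1 : V 1 = N) {p q : ℝ} (hpq : p ≤ q) : q - p ≤ circLift V N q - circLift V N p := by
  linarith [monotone_circLift_sub_self hVnn hVmono hV1 hpq]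

lemma abs_sub_le_abs_circLift_sub (hVnn : ∀ x, 0 ≤ x → 0 ≤ V x) (hVmono : MonotoneOn V (Ici 0))
    (hV1 : V 1 = N) (p q : ℝ) : |p - q| ≤ |circLift V N p - circLift V N q| := by
  wlog h : q ≤ p generalizing p q
  · rw [abs_sub_comm p, abs_sub_comm (circLift V N p)]
    exact this q p (le_of_not_ge h)
  rw [abs_of_nonneg (sub_nonneg.mpr h)]
  exact (sub_le_circLift_sub hVnn hVmono hV1 h).trans (le_abs_self _)

lemma strictMono_circLift (hVnn : ∀ x, 0 ≤ x → 0 ≤ V x) (hVmono : MonotoneOn V (Ici 0))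
    (hV1 : V 1 = N) : StrictMono (circLift V N) := fun p q hpq => by
  linarith [sub_le_circLift_sub hVnn hVmono hV1 hpq.le]

lemma surjective_circLift (hVnn : ∀ x, 0 ≤ x → 0 ≤ V x) (hVmono : MonotoneOn V (Ici 0))
    (hVcont : ContinuousOn V (Ici 0)) (hV1 : V 1 = N) : Function.Surjective (circLift V N) := by
  have hmono := monotone_circLift_sub_self hVnn hVmono hV1
  refine (continuous_circLift hVcont hV1).surjective ?_ ?_
  · refine tendsto_atTop_mono' _ ?_ (tendsto_atTop_add_const_right _ (circLift V N 0) tendsto_id)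
    filter_upwards [eventually_ge_atTop 0] with x hx
    linarith [hmono hx, id_eq x]
  · refine tendsto_atBot_mono' _ ?_ (tendsto_atBot_add_const_right _ (circLift V N 0) tendsto_id)
    filter_upwards [eventually_le_atBot 0] with x hx
    linarith [hmono hx, id_eq x]

lemma sub_add_le_circLift_sub (hVnn : ∀ x, 0 ≤ x → 0 ≤ V x) (hVmono : MonotoneOn V (Ici 0))
    (hV1 : V 1 = N) {p q : ℝ} (hpq : p ≤ q) (hqp : q < p + 1) :
    (q - p) + (q - p) / 2 * V ((q - p) / 2) ≤ circLift V N q - circLift V N p := by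
  suffices (q - p) / 2 * V ((q - p) / 2) ≤ (circLift V N q - q) - (circLift V N p - p) by
    linarith
  rw [circLift_sub_self, circLift_sub_self]
  have hψ := monotoneOn_mul_apply hVnn hVmono
  have ha := Int.fract_nonneg p
  have hb := Int.fract_nonneg q
  have ha₁ := Int.fract_lt_one p
  have hfloor : ⌊q⌋ ≤ ⌊p⌋ + 1 := by
    simpa only [Int.floor_add_one] using Int.floor_mono hqp.le
  rcases (Int.floor_mono hpq).eq_or_lt with h | h
  · have hba : Int.fract q - Int.fract p = q - p := by
      rw [Int.fract, Int.fract, h]; ring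
    have hsuper := mul_apply_add_mul_apply_le hVmono ha (sub_nonneg.mpr (show Int.fract p ≤
      Int.fract q by linarith))
    rw [add_sub_cancel, hba] at hsuper
    have hhalf := hψ (mem_Ici.mpr (by linarith)) (mem_Ici.mpr (by linarith))
      (show (q - p) / 2 ≤ q - p by linarith)
    simp only at hhalf
    rw [← h]
    linarith
  · have hsucc : (⌊q⌋ : ℝ) = ⌊p⌋ + 1 := by exact_mod_cast (by omega : ⌊q⌋ = ⌊p⌋ + 1)
    have hsum : Int.fract q + (1 - Int.fract p) = q - p := by
      rw [Int.fract, Int.fract, hsucc]; ring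
    have hsuper := mul_apply_add_mul_apply_le hVmono ha (sub_nonneg.mpr ha₁.le)
    rw [add_sub_cancel, one_mul, hV1] at hsuper
    have hψq := mul_nonneg hb (hVnn _ hb)
    have hψp := mul_nonneg (sub_nonneg.mpr ha₁.le) (hVnn _ (sub_nonneg.mpr ha₁.le))
    rw [hsucc]
    rcases le_total ((q - p) / 2) (Int.fract q) with hle | hle
    · have := hψ (mem_Ici.mpr (by linarith)) (mem_Ici.mpr hb) hle
      simp only at this
      linarith
    · have := hψ (mem_Ici.mpr (by linarith)) (mem_Ici.mpr (sub_nonneg.mpr ha₁.le))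
        (show (q - p) / 2 ≤ 1 - Int.fract p by linarith)
      simp only at this
      linarith

lemma abs_sub_add_le_abs_circLift_sub (hVnn : ∀ x, 0 ≤ x → 0 ≤ V x)
    (hVmono : MonotoneOn V (Ici 0)) (hV1 : V 1 = N) {p q : ℝ} (hpq : |p - q| < 1) :
    |p - q| + |p - q| / 2 * V (|p - q| / 2) ≤ |circLift V N p - circLift V N q| := by
  wlog h : q ≤ p generalizing p q
  · rw [abs_sub_comm p, abs_sub_comm (circLift V N p)] at *
    exact this hpq (le_of_not_ge h)
  rw [abs_of_nonneg (sub_nonneg.mpr h)] at hpq ⊢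
  exact (sub_add_le_circLift_sub hVnn hVmono hV1 h (by linarith)).trans (le_abs_self _)

lemma exists_injOn_circMap_cdist_lt (hVnn : ∀ x, 0 ≤ x → 0 ≤ V x)
    (hVmono : MonotoneOn V (Ici 0)) (hVcont : ContinuousOn V (Ici 0)) (hV1 : V 1 = N) :
    ∃ ρ > 0, ∀ z, InjOn (circMap V) {u ∈ Ico 0 1 | cdist z u < ρ} := by
  obtain ⟨δ, hδ, hunif⟩ := Metric.uniformContinuousOn_iff.mp
    (isCompact_Icc.uniformContinuousOn_of_continuous
      (continuous_circLift hVcont hV1).continuousOn) 1 one_pos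
  refine ⟨δ / 2, half_pos hδ, fun z u ⟨hu, hzu⟩ u' ⟨hu', hzu'⟩ heq => ?_⟩
  obtain ⟨m, hm, hzm⟩ := exists_int_cdist_eq z u
  obtain ⟨m', hm', hzm'⟩ := exists_int_cdist_eq z u'
  have hmem : ∀ {v : ℝ} {k : ℤ}, v ∈ Ico 0 1 → |k| ≤ 1 → v + k ∈ Icc (-1 : ℝ) 2 := by
    intro v k hv hk
    have := abs_le.mp (show |(k : ℝ)| ≤ 1 by exact_mod_cast hk)
    exact ⟨by linarith [hv.1], by linarith [hv.2]⟩
  -- The lifts `u + m` and `u' + m'` are close, and `circLift` maps them to points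
  -- differing by an integer; uniform continuity forces that integer to vanish.
  have hclose : dist (u + m) (u' + m') < δ := by
    rw [Real.dist_eq]
    calc |u + m - (u' + m')| ≤ |u + m - z| + |z - (u' + m')| := abs_sub_le _ _ _
      _ = cdist z u + cdist z u' := by rw [abs_sub_comm, hzm, hzm']
      _ < δ := by linarith
  have hfract : Int.fract (circLift V N (u + m)) = Int.fract (circLift V N (u' + m')) := by
    rw [← circMap_fract, ← circMap_fract, fract_add_intCast_of_mem_Ico hu,
      fract_add_intCast_of_mem_Ico hu']
    exact heq
  obtain ⟨k, hk⟩ := Int.fract_eq_fract.mp hfract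
  have hk0 : k = 0 := by
    have := hunif _ (hmem hu hm) _ (hmem hu' hm') hclose
    rw [Real.dist_eq, hk] at this
    exact Int.abs_lt_one_iff.mp (by exact_mod_cast this)
  rw [hk0, Int.cast_zero, sub_eq_zero] at hk
  have hlift := (strictMono_circLift hVnn hVmono hV1).injective hk
  rw [← fract_add_intCast_of_mem_Ico hu m, ← fract_add_intCast_of_mem_Ico hu' m', hlift]

lemma exists_circMap_fract_eq (hVnn : ∀ x, 0 ≤ x → 0 ≤ V x)
    (hVmono : MonotoneOn V (Ici 0)) (hVcont : ContinuousOn V (Ici 0)) (hV1 : V 1 = N)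
    {x₁ y₀ : ℝ} (hx₁ : x₁ ∈ Ico 0 1) (hy₀ : y₀ ∈ Ico 0 1) :
    ∃ w, circMap V (Int.fract w) = y₀ ∧
      |circLift V N x₁ - circLift V N w| = cdist (circMap V x₁) y₀ := by
  obtain ⟨m, -, hm⟩ := exists_int_cdist_eq (circMap V x₁) y₀
  have hx₀ : circMap V x₁ = Int.fract (circLift V N x₁) := by
    rw [← circMap_fract, Int.fract_eq_self.mpr hx₁]
  obtain ⟨w, hw⟩ := surjective_circLift hVnn hVmono hVcont hV1 (⌊circLift V N x₁⌋ + (y₀ + m))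
  refine ⟨w, ?_, ?_⟩
  · rw [circMap_fract, hw, add_comm, add_assoc, ← Int.cast_add, fract_add_intCast_of_mem_Ico hy₀]
  · rw [hm, hw, hx₀, Int.fract]
    ring_nf

lemma exists_circMap_eq_add_le_cdist (hVnn : ∀ x, 0 ≤ x → 0 ≤ V x)
    (hVmono : MonotoneOn V (Ici 0)) (hVcont : ContinuousOn V (Ici 0)) (hV1 : V 1 = N)
    {x₁ y₀ : ℝ} (hx₁ : x₁ ∈ Ico 0 1) (hy₀ : y₀ ∈ Ico 0 1) (hD : cdist (circMap V x₁) y₀ < 1) :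
    ∃ y₁ ∈ Ico (0 : ℝ) 1, circMap V y₁ = y₀ ∧ cdist x₁ y₁ ≤ cdist (circMap V x₁) y₀ ∧
      cdist x₁ y₁ + cdist x₁ y₁ / 2 * V (cdist x₁ y₁ / 2) ≤ cdist (circMap V x₁) y₀ := by
  obtain ⟨w, hw, hFw⟩ := exists_circMap_fract_eq hVnn hVmono hVcont hV1 (N := N) hx₁ hy₀
  have hle : |x₁ - w| ≤ cdist (circMap V x₁) y₀ :=
    hFw ▸ abs_sub_le_abs_circLift_sub hVnn hVmono hV1 x₁ w
  have hlt : |x₁ - w| < 1 := hle.trans_lt hD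
  have hd := cdist_fract_le hx₁ hlt
  have hd₀ := cdist_nonneg x₁ (Int.fract w)
  have hψ := monotoneOn_mul_apply hVnn hVmono (show cdist x₁ (Int.fract w) / 2 ∈ Ici 0 by
    simp only [mem_Ici]; linarith) (show |x₁ - w| / 2 ∈ Ici 0 by
    simp only [mem_Ici]; positivity) (by linarith)
  have hexp := abs_sub_add_le_abs_circLift_sub hVnn hVmono hV1 (N := N) hlt
  refine ⟨Int.fract w, ⟨Int.fract_nonneg w, Int.fract_lt_one w⟩, hw, hd.trans hle, ?_⟩
  simp only at hψ
  rw [← hFw]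
  linarith

end Lift

lemma ConcaveOn.mul_sub_le_sub {Ω : ℝ → ℝ} (hΩ : ConcaveOn ℝ (Ici 0) Ω) {d h t : ℝ}
    (hd : 0 ≤ d) (hh : 0 ≤ h) (ht₀ : 0 ≤ t) (ht₁ : t ≤ 1) :
    t * (Ω (d + h) - Ω d) ≤ Ω (d + t * h) - Ω d := by
  have := hΩ.2 (mem_Ici.mpr hd) (mem_Ici.mpr (add_nonneg hd hh)) (sub_nonneg.mpr ht₁) ht₀
    (sub_add_cancel 1 t)
  simp only [smul_eq_mul] at this
  rw [show (1 - t) * d + t * (d + h) = d + t * h by ring] at this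
  linarith

lemma add_mul_le_of_concaveOn {V ω Ω : ℝ → ℝ} (hΩmono : Monotone Ω) (hΩconc : ConcaveOn ℝ (Ici 0) Ω)
    {c C d D : ℝ} (hc : 0 ≤ c) (hd : 0 ≤ d) (hVd₀ : 0 ≤ V d) (hVd₁ : V d ≤ 1)
    (hreg : 2 * c * V d ≤ V (d / 2)) (hlim : C * ω d ≤ V d * (Ω ((1 + c) * d) - Ω d))
    (hD : d + d / 2 * V (d / 2) ≤ D) :
    Ω d + C * ω d ≤ Ω D := by
  have hcd : 0 ≤ c * d := mul_nonneg hc hd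
  have hstep : d + V d * (c * d) ≤ D := by
    have := mul_le_mul_of_nonneg_left hreg (show 0 ≤ d / 2 by linarith)
    linarith
  calc Ω d + C * ω d ≤ Ω d + V d * (Ω (d + c * d) - Ω d) := by
        rw [show d + c * d = (1 + c) * d by ring]; linarith
    _ ≤ Ω (d + V d * (c * d)) := by linarith [hΩconc.mul_sub_le_sub hd hcd hVd₀ hVd₁]
    _ ≤ Ω D := hΩmono hstep

lemma eventually_mul_le_of_lt_liminf {V ω Ω : ℝ → ℝ} (hVnn : ∀ x, 0 ≤ x → 0 ≤ V x)
    (hωnn : ∀ x, 0 ≤ ω x) (hΩmono : Monotone Ω) {b c : ℝ} (hc : 0 ≤ c)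
    (hb : b < liminf (fun x => V x / ω x * (Ω ((1 + c) * x) - Ω x)) (𝓝[>] 0)) :
    ∀ᶠ x in 𝓝[>] 0, b * ω x ≤ V x * (Ω ((1 + c) * x) - Ω x) := by
  have hΔ : ∀ᶠ x in 𝓝[>] (0 : ℝ), 0 ≤ Ω ((1 + c) * x) - Ω x := by
    filter_upwards [self_mem_nhdsWithin] with x (hx : 0 < x)
    exact sub_nonneg.mpr (hΩmono (by nlinarith))
  have hbdd : IsBoundedUnder (· ≥ ·) (𝓝[>] 0)
      (fun x => V x / ω x * (Ω ((1 + c) * x) - Ω x)) := by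
    refine isBoundedUnder_of_eventually_ge (a := 0) ?_
    filter_upwards [self_mem_nhdsWithin, hΔ] with x (hx : 0 < x) hΔx
    exact mul_nonneg (div_nonneg (hVnn x hx.le) (hωnn x)) hΔx
  filter_upwards [eventually_lt_of_lt_liminf hb hbdd, self_mem_nhdsWithin, hΔ]
    with x hlt (hx : 0 < x) hΔx
  rcases (hωnn x).eq_or_lt with hω | hω
  · rw [← hω, mul_zero]
    exact mul_nonneg (hVnn x hx.le) hΔx
  · have := mul_lt_mul_of_pos_right hlt hω
    rw [div_mul_eq_mul_div, div_mul_cancel₀ _ hω.ne'] at this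
    exact this.le

lemma eventually_two_mul_le_apply_half {V : ℝ → ℝ} (hVnn : ∀ x, 0 ≤ x → 0 ≤ V x) {σ c : ℝ}
    (hreg : Tendsto (fun x => V (1 / 2 * x) / V x) (𝓝[>] 0) (𝓝 ((1 / 2) ^ σ)))
    (hc₀ : 0 < c) (hc : c ≤ 2 ^ (-(σ + 2))) :
    ∀ᶠ x in 𝓝[>] 0, 2 * c * V x ≤ V (x / 2) := by
  have hpow : (2 : ℝ) ^ (-(σ + 2)) = (1 / 2) ^ σ / 4 := by
    rw [rpow_neg zero_le_two, rpow_add two_pos, one_div, inv_rpow zero_le_two]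
    norm_num
    ring
  have hlt : 2 * c < (1 / 2 : ℝ) ^ σ := by
    have : (0 : ℝ) < (1 / 2) ^ σ := by positivity
    linarith
  filter_upwards [hreg.eventually (eventually_gt_nhds hlt), self_mem_nhdsWithin]
    with x hx (hx₀ : 0 < x)
  have hVx : 0 < V x := by
    refine (hVnn x hx₀.le).lt_of_ne fun h => ?_
    rw [← h, div_zero] at hx
    linarith
  rw [lt_div_iff₀ hVx, show 1 / 2 * x = x / 2 by ring] at hx
  exact hx.le

lemma exists_add_mul_le_of_liminf_pos {V ω Ω : ℝ → ℝ} {σ c : ℝ} (hV0 : V 0 = 0)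
    (hVnn : ∀ x, 0 ≤ x → 0 ≤ V x) (hVcont : ContinuousOn V (Ici 0))
    (hreg : Tendsto (fun x => V (1 / 2 * x) / V x) (𝓝[>] 0) (𝓝 ((1 / 2) ^ σ)))
    (hω0 : ω 0 = 0) (hωnn : ∀ x, 0 ≤ ω x) (hΩmono : Monotone Ω)
    (hΩconc : ConcaveOn ℝ (Ici 0) Ω) (hc₀ : 0 < c) (hc : c ≤ 2 ^ (-(σ + 2)))
    (hL : 0 < liminf (fun x => V x / ω x * (Ω ((1 + c) * x) - Ω x)) (𝓝[>] 0)) :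
    ∃ C > 0, ∃ ε > 0, ∀ d D, 0 ≤ d → d < ε → d + d / 2 * V (d / 2) ≤ D →
      Ω d + C * ω d ≤ Ω D := by
  set L := liminf (fun x => V x / ω x * (Ω ((1 + c) * x) - Ω x)) (𝓝[>] 0)
  have hV : Tendsto V (𝓝[>] 0) (𝓝 0) := by
    simpa only [hV0] using ((hVcont 0 self_mem_Ici).mono Ioi_subset_Ici_self).tendsto
  have hsmall := (eventually_mul_le_of_lt_liminf hVnn hωnn hΩmono hc₀.le (half_lt_self hL)).and
    ((eventually_two_mul_le_apply_half hVnn hreg hc₀ hc).and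
      (hV.eventually (eventually_le_nhds zero_lt_one)))
  obtain ⟨ε, hε, hsub⟩ := mem_nhdsGT_iff_exists_Ioo_subset.mp hsmall
  refine ⟨L / 2, half_pos hL, ε, hε, fun d D hd hdε hD => ?_⟩
  rcases hd.eq_or_lt with rfl | hd₀
  · rw [hω0, mul_zero, add_zero]
    exact hΩmono (by simpa [hV0] using hD)
  · obtain ⟨hlim, hreg', hV1⟩ := hsub ⟨hd₀, hdε⟩
    exact add_mul_le_of_concaveOn hΩmono hΩconc hc₀.le hd (hVnn d hd) hV1 hreg' hlim hD

theorem sufficient_condition_T_compatibility_general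
    (V ω Ω : ℝ → ℝ) (σ : ℝ) (N : ℕ)
    (hV0 : V 0 = 0) (hV1 : V 1 = N) (hVnn : ∀ x, 0 ≤ x → 0 ≤ V x)
    (hVcont : ContinuousOn V (Ici 0)) (hVmono : StrictMonoOn V (Ici 0))
    (hreg : ∀ t : ℝ, 0 < t →
      Tendsto (fun x => V (t * x) / V x) (nhdsWithin 0 (Ioi 0)) (nhds (t ^ σ)))
    (hω0 : ω 0 = 0) (hωnn : ∀ x, 0 ≤ ω x)
    (hΩmono : Monotone Ω) (hΩconc : ConcaveOn ℝ (Ici 0) Ω)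
    (hliminf : ∃ c : ℝ, 0 < c ∧ c ≤ (2 : ℝ) ^ (-(σ + 2)) ∧
      0 < Filter.liminf (fun x => V x / ω x * (Ω ((1 + c) * x) - Ω x))
            (nhdsWithin 0 (Ioi 0))) :
    ∃ ρ₁ > 0, ∃ C₁ > 0,
      (∀ x₀ ∈ Ico (0 : ℝ) 1, ∀ x₁ ∈ Ico (0 : ℝ) 1, ∀ y₀ ∈ Ico (0 : ℝ) 1,
        circMap V x₁ = x₀ → cdist x₀ y₀ < ρ₁ →
        ∃! y₁ : ℝ, y₁ ∈ Ico (0 : ℝ) 1 ∧ circMap V y₁ = y₀ ∧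
          cdist x₁ y₁ ≤ cdist x₀ y₀ ∧
          Ω (cdist x₁ y₁) + C₁ * ω (cdist x₁ y₁) ≤ Ω (cdist x₀ y₀)) ∧
      (∀ x₀ ∈ Ico (0 : ℝ) 1, ∀ y₀ ∈ Ico (0 : ℝ) 1, cdist x₀ y₀ < ρ₁ →
        ∀ x₁ x₁' y₁ y₁' : ℝ, x₁ ∈ Ico (0 : ℝ) 1 → x₁' ∈ Ico (0 : ℝ) 1 →
          y₁ ∈ Ico (0 : ℝ) 1 → y₁' ∈ Ico (0 : ℝ) 1 →
          circMap V x₁ = x₀ → circMap V x₁' = x₀ →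
          circMap V y₁ = y₀ → circMap V y₁' = y₀ →
          cdist x₁ y₁ ≤ cdist x₀ y₀ → cdist x₁' y₁' ≤ cdist x₀ y₀ →
          x₁ ≠ x₁' → y₁ ≠ y₁') := by
  obtain ⟨c, hc₀, hc, hL⟩ := hliminf
  have hVmono' := hVmono.monotoneOn
  obtain ⟨C, hC, ε, hε, hgain⟩ := exists_add_mul_le_of_liminf_pos hV0 hVnn hVcont
    (hreg (1 / 2) one_half_pos) hω0 hωnn hΩmono hΩconc hc₀ hc hL
  obtain ⟨ρ, hρ, hinj⟩ := exists_injOn_circMap_cdist_lt hVnn hVmono' hVcont hV1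
  refine ⟨min ε (min ρ 1), lt_min hε (lt_min hρ one_pos), C, hC, ?_, ?_⟩
  · rintro x₀ - x₁ hx₁ y₀ hy₀ rfl hD
    obtain ⟨hDε, hDρ, hD₁⟩ := lt_min_iff.mp hD |>.imp_right lt_min_iff.mp
    obtain ⟨y₁, hy₁, hTy₁, hd, hexp⟩ :=
      exists_circMap_eq_add_le_cdist hVnn hVmono' hVcont hV1 hx₁ hy₀ hD₁
    refine ⟨y₁, ⟨hy₁, hTy₁, hd, hgain _ _ (cdist_nonneg _ _) (hd.trans_lt hDε) hexp⟩, ?_⟩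
    rintro y ⟨hy, hTy, hyd, -⟩
    exact hinj x₁ ⟨hy, hyd.trans_lt hDρ⟩ ⟨hy₁, hd.trans_lt hDρ⟩ (hTy.trans hTy₁.symm)
  · rintro x₀ - y₀ - hD x₁ x₁' y₁ y₁' hx₁ hx₁' - - hTx hTx' - - hd hd' hne rfl
    have hDρ : cdist x₀ y₀ < ρ := hD.trans_le ((min_le_right _ _).trans (min_le_left _ _))
    refine hne (hinj y₁ ⟨hx₁, ?_⟩ ⟨hx₁', ?_⟩ (hTx.trans hTx'.symm))
    · rw [cdist_comm]; exact hd.trans_lt hDρ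
    · rw [cdist_comm]; exact hd'.trans_lt hDρ

/-- Sufficient condition for `T`-compatibility: if for some sufficiently small `c > 0`
(`0 < c ≤ 2^{−(σ+2)}`) one has
`liminf_{x→0⁺} (V(x)/ω(x))·(Ω((1+c)x) − Ω(x)) > 0`,
then there are `ρ₁ > 0` and `C₁ > 0` such that for all `x₀, x₁, y₀` on the circle with
`T(x₁) = x₀` and `d(x₀,y₀) < ρ₁` there is a unique preimage `y₁` of `y₀` with
`d(x₁,y₁) ≤ d(x₀,y₀)` and `Ω(d(x₁,y₁)) + C₁ ω(d(x₁,y₁)) ≤ Ω(d(x₀,y₀))`; moreover the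
correspondence `x₁ ↦ y₁` is injective. -/
theorem sufficient_condition_T_compatibility
    (V ω Ω : ℝ → ℝ) (σ : ℝ) (hσ : 0 ≤ σ) (N : ℕ) (hN : 0 < N)
    (hV0 : V 0 = 0) (hV1 : V 1 = N) (hVnn : ∀ x, 0 ≤ x → 0 ≤ V x)
    (hVcont : ContinuousOn V (Ici 0)) (hVmono : StrictMonoOn V (Ici 0))
    (hreg : ∀ t : ℝ, 0 < t →
      Tendsto (fun x => V (t * x) / V x) (nhdsWithin 0 (Ioi 0)) (nhds (t ^ σ)))
    (hω0 : ω 0 = 0) (hωcont : Continuous ω) (hωmono : Monotone ω)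
    (hωnn : ∀ x, 0 ≤ ω x) (hωconc : ConcaveOn ℝ (Ici 0) ω)
    (hΩ0 : Ω 0 = 0) (hΩcont : Continuous Ω) (hΩmono : Monotone Ω)
    (hΩnn : ∀ x, 0 ≤ Ω x) (hΩconc : ConcaveOn ℝ (Ici 0) Ω)
    (hliminf : ∃ c : ℝ, 0 < c ∧ c ≤ (2 : ℝ) ^ (-(σ + 2)) ∧
      0 < Filter.liminf (fun x => V x / ω x * (Ω ((1 + c) * x) - Ω x))
            (nhdsWithin 0 (Ioi 0))) :
    ∃ ρ₁ > 0, ∃ C₁ > 0,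
      (∀ x₀ ∈ Ico (0 : ℝ) 1, ∀ x₁ ∈ Ico (0 : ℝ) 1, ∀ y₀ ∈ Ico (0 : ℝ) 1,
        circMap V x₁ = x₀ → cdist x₀ y₀ < ρ₁ →
        ∃! y₁ : ℝ, y₁ ∈ Ico (0 : ℝ) 1 ∧ circMap V y₁ = y₀ ∧
          cdist x₁ y₁ ≤ cdist x₀ y₀ ∧
          Ω (cdist x₁ y₁) + C₁ * ω (cdist x₁ y₁) ≤ Ω (cdist x₀ y₀)) ∧
      (∀ x₀ ∈ Ico (0 : ℝ) 1, ∀ y₀ ∈ Ico (0 : ℝ) 1, cdist x₀ y₀ < ρ₁ →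
        ∀ x₁ x₁' y₁ y₁' : ℝ, x₁ ∈ Ico (0 : ℝ) 1 → x₁' ∈ Ico (0 : ℝ) 1 →
          y₁ ∈ Ico (0 : ℝ) 1 → y₁' ∈ Ico (0 : ℝ) 1 →
          circMap V x₁ = x₀ → circMap V x₁' = x₀ →
          circMap V y₁ = y₀ → circMap V y₁' = y₀ →
          cdist x₁ y₁ ≤ cdist x₀ y₀ → cdist x₁' y₁' ≤ cdist x₀ y₀ →
          x₁ ≠ x₁' → y₁ ≠ y₁') :=
  sufficient_condition_T_compatibility_general V ω Ω σ N hV0 hV1 hVnn hVcont hVmono hreg hω0 hωnn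
    hΩmono hΩconc hliminf
end

section
/- Let T : 𝕋 → 𝕋 be continuous with finitely many preimages at each point, f continuous, and suppose there exist χ > 0 and a continuous positive function h with 𝓛_f h = χ h, where 𝓛_f is the transfer operator. Let ν be a Borel probability with 𝓛_f* ν = χ ν and set μ = h·ν (assuming ∫ h dν = 1). Then μ is a T-invariant probability measure: ∫ ψ∘T dμ = ∫ ψ dμ for all continuous ψ. -/
/-!
A factor `ψ ∘ T` is constant on each fibre of `T`, so it comes out of the sum over preimages:
`𝓛_f ((ψ ∘ T) · h) = ψ · 𝓛_f h = χ ψ h`. Integrating against the eigenmeasure `ν` and dividing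
by `χ` gives `∫ (ψ ∘ T) h dν = ∫ ψ h dν`, which is the invariance of `μ = h · ν`.
-/

open Real MeasureTheory

namespace MeasureTheory

variable {X : Type*} [MeasurableSpace X] {ν : Measure X} {h : X → ℝ}

theorem integral_withDensity_ofReal (hm : AEMeasurable h ν) (h0 : 0 ≤ᵐ[ν] h) (g : X → ℝ) :
    ∫ x, g x ∂ν.withDensity (fun x => ENNReal.ofReal (h x)) = ∫ x, g x * h x ∂ν := by
  rw [integral_withDensity_eq_integral_toReal_smul₀ hm.ennreal_ofReal
    (ae_of_all _ fun _ => ENNReal.ofReal_lt_top)]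
  refine integral_congr_ae (h0.mono fun x hx => ?_)
  dsimp only
  rw [ENNReal.toReal_ofReal hx, smul_eq_mul, mul_comm]

theorem isProbabilityMeasure_withDensity_ofReal (h0 : 0 ≤ᵐ[ν] h) (hint : ∫ x, h x ∂ν = 1) :
    IsProbabilityMeasure (ν.withDensity fun x => ENNReal.ofReal (h x)) := by
  -- a non-integrable function would have Bochner integral `0`, not `1`
  have hintegrable : Integrable h ν := Integrable.of_integral_ne_zero (by simp [hint])
  constructor
  rw [withDensity_apply _ MeasurableSet.univ, Measure.restrict_univ,
    ← ofReal_integral_eq_lintegral_ofReal hintegrable h0, hint, ENNReal.ofReal_one]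

end MeasureTheory

noncomputable def transferOperator {X : Type*} (T : X → X) (f ψ : X → ℝ) (x : X) : ℝ :=
  ∑' y : T ⁻¹' {x}, exp (f y) * ψ y

section TransferOperator

variable {X : Type*} {T : X → X} {f h : X → ℝ}

theorem transferOperator_comp_mul (ψ φ : X → ℝ) (x : X) :
    transferOperator T f (fun y => ψ (T y) * φ y) x = ψ x * transferOperator T f φ x := by
  rw [transferOperator, transferOperator, ← tsum_mul_left]
  refine tsum_congr fun ⟨y, hy⟩ => ?_
  rw [show T y = x from hy]
  ring

theorem integral_comp_mul_eigenfunction_eq [MeasurableSpace X] {ν : Measure X} {χ : ℝ} (hχ : χ ≠ 0)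
    (heig : ∀ x, transferOperator T f h x = χ * h x) {ψ : X → ℝ}
    (hdual : ∫ x, transferOperator T f (fun y => ψ (T y) * h y) x ∂ν =
      χ * ∫ x, ψ (T x) * h x ∂ν) :
    ∫ x, ψ (T x) * h x ∂ν = ∫ x, ψ x * h x ∂ν := by
  refine (mul_left_cancel₀ hχ ?_).symm
  rw [← hdual, ← integral_const_mul]
  congr 1 with x
  rw [transferOperator_comp_mul, heig]
  ring

end TransferOperator

theorem eigenmeasure_invariant_general {X : Type*} [TopologicalSpace X]
    [MeasurableSpace X] [BorelSpace X]
    (T : X → X) (hT : Continuous T)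
    (f h : X → ℝ) (hh : Continuous h) (hhpos : ∀ x, 0 < h x)
    (χ : ℝ) (hχ : 0 < χ)
    (L : (X → ℝ) → (X → ℝ))
    (hL : ∀ ψ : X → ℝ, ∀ x, L ψ x = ∑' y : T ⁻¹' {x}, Real.exp (f y) * ψ y)
    (heig : ∀ x, L h x = χ * h x)
    (ν : Measure X)
    (hdual : ∀ φ : X → ℝ, Continuous φ → ∫ x, L φ x ∂ν = χ * ∫ x, φ x ∂ν)
    (hnorm : ∫ x, h x ∂ν = 1)
    (μ : Measure X) (hμ : μ = ν.withDensity (fun x => ENNReal.ofReal (h x))) :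
    IsProbabilityMeasure μ ∧
      ∀ ψ : X → ℝ, Continuous ψ → ∫ x, ψ (T x) ∂μ = ∫ x, ψ x ∂μ := by
  obtain rfl : L = transferOperator T f := funext fun ψ => funext (hL ψ)
  have h0 : 0 ≤ᵐ[ν] h := ae_of_all _ fun x => (hhpos x).le
  subst hμ
  refine ⟨isProbabilityMeasure_withDensity_ofReal h0 hnorm, fun ψ hψ => ?_⟩
  have hdens := integral_withDensity_ofReal hh.aemeasurable h0
  rw [hdens, hdens]
  exact integral_comp_mul_eigenfunction_eq hχ.ne' heig (hdual _ ((hψ.comp hT).mul hh))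

/-- If `𝓛_f h = χ h` with `h > 0` continuous, `χ > 0`, and `𝓛_f* ν = χ ν` for a Borel
probability `ν` with `∫ h dν = 1`, then `μ = h·ν` is a `T`-invariant probability:
`∫ ψ∘T dμ = ∫ ψ dμ` for every continuous `ψ`. -/
theorem eigenmeasure_invariant {X : Type*} [TopologicalSpace X] [CompactSpace X]
    [MeasurableSpace X] [BorelSpace X]
    (T : X → X) (hT : Continuous T) (hfin : ∀ x, (T ⁻¹' {x}).Finite)
    (f h : X → ℝ) (hf : Continuous f) (hh : Continuous h) (hhpos : ∀ x, 0 < h x)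
    (χ : ℝ) (hχ : 0 < χ)
    (L : (X → ℝ) → (X → ℝ))
    (hL : ∀ ψ : X → ℝ, ∀ x, L ψ x = ∑' y : T ⁻¹' {x}, Real.exp (f y) * ψ y)
    (heig : ∀ x, L h x = χ * h x)
    (ν : Measure X) [IsProbabilityMeasure ν]
    (hdual : ∀ φ : X → ℝ, Continuous φ → ∫ x, L φ x ∂ν = χ * ∫ x, φ x ∂ν)
    (hnorm : ∫ x, h x ∂ν = 1)
    (μ : Measure X) (hμ : μ = ν.withDensity (fun x => ENNReal.ofReal (h x))) :
    IsProbabilityMeasure μ ∧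
      ∀ ψ : X → ℝ, Continuous ψ → ∫ x, ψ (T x) ∂μ = ∫ x, ψ x ∂μ :=
  eigenmeasure_invariant_general T hT f h hh hhpos χ hχ L hL heig ν hdual hnorm μ hμ
end

section
/- Let T : 𝕋 → 𝕋 be topologically exact and 𝓛 a Markov transfer operator (𝓛𝟙 = 𝟙) with strictly positive weights on C⁰(𝕋). Suppose ψ is a continuous real function such that max 𝓛^k ψ = max ψ for all k ≥ 1. Then for every k, T^{−k}(argmax 𝓛^k ψ) ⊆ argmax ψ, and consequently ψ attains its maximum on a dense set, hence ψ is constant. -/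
/-!
A convex combination with positive weights of values `≤ M` equals `M` only if every value is
`M`. Hence if `𝓛φ` attains `max φ` at `x`, then `φ = max φ` on all of `T⁻¹{x}`; since
`max 𝓛ᵏψ = max ψ`, iterating this pulls `argmax 𝓛ᵏψ` back under `Tᵏ` into `argmax ψ`.
By exactness, `Tᵏ` maps any nonempty open set onto the compact space, so in particular onto a
maximiser of `𝓛ᵏψ`: the closed set `argmax ψ` is dense, hence everything.
-/

open Set

theorem eq_of_tsum_mul_eq_of_le {ι : Type*} [Finite ι] {w f : ι → ℝ} {M : ℝ}
    (hw : ∀ i, 0 < w i) (hw1 : ∑' i, w i = 1) (hf : ∀ i, f i ≤ M)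
    (hsum : ∑' i, w i * f i = M) (i : ι) : f i = M := by
  have := Fintype.ofFinite ι
  rw [tsum_fintype] at hw1 hsum
  have hsum' : ∑ j, w j * f j = ∑ j, w j * M := by
    rw [hsum, ← Finset.sum_mul, hw1, one_mul]
  have hi := (Finset.sum_eq_sum_iff_of_le fun j _ =>
    mul_le_mul_of_nonneg_left (hf j) (hw j).le).1 hsum' i (Finset.mem_univ i)
  exact mul_left_cancel₀ (hw i).ne' hi

section TransferOperator

variable {X : Type*} {T : X → X} {p : X → ℝ} {L : (X → ℝ) → (X → ℝ)}

theorem eq_sSup_of_transfer_apply_eq_sSup (hfin : ∀ x, (T ⁻¹' {x}).Finite)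
    (hppos : ∀ x, 0 < p x) (hmarkov : ∀ x, ∑' y : T ⁻¹' {x}, p (y : X) = 1)
    (hL : ∀ φ : X → ℝ, ∀ x, L φ x = ∑' y : T ⁻¹' {x}, p (y : X) * φ (y : X))
    {φ : X → ℝ} (hφ : BddAbove (range φ)) {y : X}
    (hy : L φ (T y) = sSup (range φ)) : φ y = sSup (range φ) := by
  have := (hfin (T y)).to_subtype
  exact eq_of_tsum_mul_eq_of_le (w := fun z : T ⁻¹' {T y} => p z) (fun z => hppos z)
    (hmarkov (T y)) (fun z => le_csSup hφ (mem_range_self _)) ((hL φ (T y)).symm.trans hy)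
    ⟨y, rfl⟩

theorem eq_sSup_of_transfer_iterate_apply_eq_sSup [TopologicalSpace X] [CompactSpace X]
    (hfin : ∀ x, (T ⁻¹' {x}).Finite) (hppos : ∀ x, 0 < p x)
    (hmarkov : ∀ x, ∑' y : T ⁻¹' {x}, p (y : X) = 1)
    (hL : ∀ φ : X → ℝ, ∀ x, L φ x = ∑' y : T ⁻¹' {x}, p (y : X) * φ (y : X))
    (hLcont : ∀ φ : X → ℝ, Continuous φ → Continuous (L φ))
    {ψ : X → ℝ} (hψ : Continuous ψ)
    (hmax : ∀ k : ℕ, 1 ≤ k → sSup (range (L^[k] ψ)) = sSup (range ψ)) (k : ℕ) (y : X)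
    (hy : (L^[k] ψ) (T^[k] y) = sSup (range (L^[k] ψ))) : ψ y = sSup (range ψ) := by
  induction k with
  | zero => simpa using hy
  | succ n ih =>
    have hcont : Continuous (L^[n] ψ) := Function.Iterate.rec Continuous hψ hLcont n
    have hsup : sSup (range (L^[n + 1] ψ)) = sSup (range (L^[n] ψ)) := by
      rcases n.eq_zero_or_pos with rfl | hn
      · exact hmax 1 le_rfl
      · rw [hmax _ le_add_self, hmax n hn]
    rw [hsup, Function.iterate_succ_apply', Function.iterate_succ_apply'] at hy
    exact ih (eq_sSup_of_transfer_apply_eq_sSup hfin hppos hmarkov hL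
      (isCompact_range hcont).bddAbove hy)

end TransferOperator

theorem max_preserved_implies_constant_general {X : Type*} [TopologicalSpace X] [CompactSpace X]
    (T : X → X)
    (hfin : ∀ x, (T ⁻¹' {x}).Finite)
    (hexact : ∀ U : Set X, IsOpen U → U.Nonempty → ∃ M : ℕ, T^[M] '' U = Set.univ)
    (p : X → ℝ) (hppos : ∀ x, 0 < p x)
    (hmarkov : ∀ x, ∑' y : T ⁻¹' {x}, p (y : X) = 1)
    (L : (X → ℝ) → (X → ℝ))
    (hL : ∀ φ : X → ℝ, ∀ x, L φ x = ∑' y : T ⁻¹' {x}, p (y : X) * φ (y : X))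
    (hLcont : ∀ φ : X → ℝ, Continuous φ → Continuous (L φ))
    (ψ : X → ℝ) (hψ : Continuous ψ)
    (hmax : ∀ k : ℕ, 1 ≤ k → sSup (Set.range (L^[k] ψ)) = sSup (Set.range ψ)) :
    (∀ k : ℕ, ∀ y : X,
        (L^[k] ψ) (T^[k] y) = sSup (Set.range (L^[k] ψ)) →
        ψ y = sSup (Set.range ψ)) ∧
      ∀ a b : X, ψ a = ψ b := by
  have hpull := eq_sSup_of_transfer_iterate_apply_eq_sSup hfin hppos hmarkov hL hLcont hψ hmax
  refine ⟨hpull, ?_⟩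
  have hdense : Dense {y | ψ y = sSup (range ψ)} := by
    refine dense_iff_inter_open.2 fun U hU hUne => ?_
    obtain ⟨k, hk⟩ := hexact U hU hUne
    have : Nonempty X := ⟨hUne.some⟩
    obtain ⟨x, hx⟩ := (isCompact_range (Function.Iterate.rec Continuous hψ hLcont k)).sSup_mem
      (range_nonempty _)
    obtain ⟨y, hyU, rfl⟩ : x ∈ T^[k] '' U := hk ▸ mem_univ x
    exact ⟨y, hyU, hpull k y hx⟩
  have hall := eq_univ_iff_forall.1
    ((isClosed_eq hψ continuous_const).closure_eq ▸ hdense.closure_eq)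
  exact fun a b => (hall a).trans (hall b).symm

/-- If `T` is topologically exact and `𝓛` a Markov transfer operator with strictly
positive weights, and `ψ` is continuous with `max 𝓛^k ψ = max ψ` for all `k ≥ 1`, then
`T^{−k}(argmax 𝓛^k ψ) ⊆ argmax ψ` for every `k`, and `ψ` is constant. -/
theorem max_preserved_implies_constant {X : Type*} [TopologicalSpace X] [CompactSpace X]
    [Nonempty X]
    (T : X → X) (hT : Continuous T) (hsurj : Function.Surjective T)
    (hfin : ∀ x, (T ⁻¹' {x}).Finite) (hne : ∀ x, (T ⁻¹' {x}).Nonempty)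
    (hexact : ∀ U : Set X, IsOpen U → U.Nonempty → ∃ M : ℕ, T^[M] '' U = Set.univ)
    (p : X → ℝ) (hp : Continuous p) (hppos : ∀ x, 0 < p x)
    (hmarkov : ∀ x, ∑' y : T ⁻¹' {x}, p (y : X) = 1)
    (L : (X → ℝ) → (X → ℝ))
    (hL : ∀ φ : X → ℝ, ∀ x, L φ x = ∑' y : T ⁻¹' {x}, p (y : X) * φ (y : X))
    (hLcont : ∀ φ : X → ℝ, Continuous φ → Continuous (L φ))
    (ψ : X → ℝ) (hψ : Continuous ψ)
    (hmax : ∀ k : ℕ, 1 ≤ k → sSup (Set.range (L^[k] ψ)) = sSup (Set.range ψ)) :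
    (∀ k : ℕ, ∀ y : X,
        (L^[k] ψ) (T^[k] y) = sSup (Set.range (L^[k] ψ)) →
        ψ y = sSup (Set.range ψ)) ∧
      ∀ a b : X, ψ a = ψ b :=
  max_preserved_implies_constant_general T hfin hexact p hppos hmarkov L hL hLcont ψ hψ hmax
end
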